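/- arXiv:1309.4322 — 4 statements merged into one kernel-verified Lean document; each statement's English description precedes it below -/
import Mathlib

section
/- Every complex Banach space X admits a semi-inner-product, i.e. there exists a map [·,·]: X × X → ℂ which is linear in the first argument, satisfies [x,x] = ‖x‖² for all x ∈ X, and satisfies |[x,y]|² ≤ [x,x]·[y,y] for all x, y ∈ X. -/
open Complex

/-- A semi-inner-product on a complex normed space: linear in the first argument,
positive definite (`[x,x] = ‖x‖²`) and satisfying the Cauchy–Schwarz inequality. -/
def IsSIP {X : Type*} [NormedAddCommGroup X] [NormedSpace ℂ X] (sip : X → X → ℂ) : Prop :=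
  (∀ x z y : X, sip (x + z) y = sip x y + sip z y) ∧
  (∀ (c : ℂ) (x y : X), sip (c • x) y = c * sip x y) ∧
  (∀ x : X, sip x x = (‖x‖ : ℂ) ^ 2) ∧
  (∀ x y : X, ‖sip x y‖ ^ 2 ≤ ‖x‖ ^ 2 * ‖y‖ ^ 2)

/-- Every complex Banach space admits a semi-inner-product. -/
theorem stmt_0 (X : Type*) [NormedAddCommGroup X] [NormedSpace ℂ X] [CompleteSpace X] :
    ∃ sip : X → X → ℂ, IsSIP sip := by
  have hf : ∀ y : X, ∃ g : X →L[ℂ] ℂ, ‖g‖ ≤ 1 ∧ g y = ‖y‖ := by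
    intro y
    by_cases hy : y = 0
    · exact ⟨0, by simp [hy]⟩
    · obtain ⟨g, hg1, hg2⟩ := exists_dual_vector ℂ y (norm_ne_zero_iff.mpr hy)
      exact ⟨g, le_of_eq hg1, hg2⟩
  choose f hf1 hf2 using hf
  refine ⟨fun x y => (‖y‖ : ℂ) * f y x, ?_, ?_, ?_, ?_⟩
  · intro x z y; simp only [map_add]; ring
  · intro c x y; simp only [map_smul, smul_eq_mul]; ring
  · intro x; simp only [hf2]; ring
  · intro x y
    have h1 : ‖(‖y‖ : ℂ) * f y x‖ = ‖y‖ * ‖f y x‖ := by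
      simp [map_mul, abs_norm]
    have h2 : ‖f y x‖ ≤ ‖x‖ := by
      calc ‖f y x‖ ≤ ‖f y‖ * ‖x‖ := (f y).le_opNorm x
        _ ≤ 1 * ‖x‖ := by gcongr; exact hf1 y
        _ = ‖x‖ := one_mul _
    simp only []
    rw [h1, mul_pow, mul_comm]
    have := pow_le_pow_left₀ (norm_nonneg _) h2 2
    nlinarith [sq_nonneg ‖y‖]
end

section
/- Let X₁, X₂ be complex Banach spaces with semi-inner-products [·,·]₁ and [·,·]₂, let A₁: D(A₁) ⊆ X₁ × X₂ → X₁ and A₂: D(A₂) ⊆ X₁ → X₂ be linear, let A_ext be the block operator A_ext(x₁,x₂) = (A₁(x₁,x₂), A₂x₁) on D(A_ext) = {(x₁,x₂) : x₁ ∈ D(A₂) and (x₁,x₂) ∈ D(A₁)}, and let S: X₂ → X₂ be bounded. Define A_S x = A₁(x, SA₂x) on D(A_S) = {x ∈ X₁ : (x, SA₂x) ∈ D(A_ext)}. Then for every x ∈ D(A_S), [A_S x, x]₁ = [A_ext(x, SA₂x), (x, SA₂x)]_{X₁×X₂} − [A₂x, SA₂x]₂, where [·,·]_{X₁×X₂}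 is the product SIP [(u₁,u₂),(v₁,v₂)] = [u₁,v₁]₁ + [u₂,v₂]₂. Consequently, if Re[A_ext z, z]_{X₁×X₂} ≤ 0 for all z ∈ D(A_ext) and Re[y, Sy]₂ ≥ m₂‖y‖₂² for some m₂ > 0 and all y ∈ X₂, then Re[A_S x, x]₁ ≤ 0 for all x ∈ D(A_S), i.e. A_S is dissipative with respect to [·,·]₁. -/
open Complex

/-- `A` is a linear operator with domain `D`. -/
def IsLinearOn {X Y : Type*} [AddCommGroup X] [Module ℂ X] [AddCommGroup Y] [Module ℂ Y]
    (D : Set X) (A : X → Y) : Prop :=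
  (∀ x ∈ D, ∀ y ∈ D, x + y ∈ D ∧ A (x + y) = A x + A y) ∧
  (∀ (c : ℂ), ∀ x ∈ D, c • x ∈ D ∧ A (c • x) = c • A x)

/-- With `A_ext (x₁,x₂) = (A₁(x₁,x₂), A₂ x₁)` and `A_S x = A₁(x, S A₂ x)` we have
`[A_S x, x]₁ = [A_ext(x, S A₂ x), (x, S A₂ x)]_{X₁×X₂} − [A₂ x, S A₂ x]₂` on `D(A_S)`;
consequently, if `A_ext` is dissipative for the product SIP and
`Re [y, S y]₂ ≥ m₂ ‖y‖²` with `m₂ > 0`, then `A_S` is dissipative w.r.t. `[·,·]₁`. -/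
theorem stmt_6 (X₁ X₂ : Type*)
    [NormedAddCommGroup X₁] [NormedSpace ℂ X₁] [CompleteSpace X₁]
    [NormedAddCommGroup X₂] [NormedSpace ℂ X₂] [CompleteSpace X₂]
    (sip1 : X₁ → X₁ → ℂ) (sip2 : X₂ → X₂ → ℂ) (h1 : IsSIP sip1) (h2 : IsSIP sip2)
    (D1 : Set (X₁ × X₂)) (A1 : X₁ × X₂ → X₁) (hA1 : IsLinearOn D1 A1)
    (D2 : Set X₁) (A2 : X₁ → X₂) (hA2 : IsLinearOn D2 A2)
    (S : X₂ →L[ℂ] X₂) :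
    -- the identity [A_S x, x]₁ = [A_ext(x,SA₂x),(x,SA₂x)]_prod − [A₂x, SA₂x]₂
    (∀ x : X₁, x ∈ D2 → (x, S (A2 x)) ∈ D1 →
      sip1 (A1 (x, S (A2 x))) x =
        (sip1 (A1 (x, S (A2 x))) x + sip2 (A2 x) (S (A2 x))) - sip2 (A2 x) (S (A2 x))) ∧
    -- consequence: dissipativity of A_S
    ((∀ z : X₁ × X₂, z.1 ∈ D2 → z ∈ D1 →
        (sip1 (A1 z) z.1 + sip2 (A2 z.1) z.2).re ≤ 0) →
      ∀ m₂ : ℝ, 0 < m₂ → (∀ y : X₂, m₂ * ‖y‖ ^ 2 ≤ (sip2 y (S y)).re) →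
      ∀ x : X₁, x ∈ D2 → (x, S (A2 x)) ∈ D1 →
        (sip1 (A1 (x, S (A2 x))) x).re ≤ 0) := by
  refine ⟨fun x _ _ => by ring, fun hdiss m₂ hm₂ hS x hx2 hx1 => ?_⟩
  have h := hdiss (x, S (A2 x)) hx2 hx1
  have h2 := hS (A2 x)
  have hnn : (0:ℝ) ≤ m₂ * ‖A2 x‖ ^ 2 := by positivity
  simp only [Complex.add_re] at h
  linarith
end

section
/- Let X₁, X₂ be complex Banach spaces, A₁: D(A₁) ⊆ X₁ × X₂ → X₁ and A₂: D(A₂) ⊆ X₁ → X₂ linear, A_ext the block operator A_ext(x₁,x₂) = (A₁(x₁,x₂), A₂x₁) on D(A_ext) = {(x₁,x₂) : x₁ ∈ D(A₂), (x₁,x₂) ∈ D(A₁)}, S: X₂ → X₂ bounded and bijective with bounded inverse, λ > 0, and P(x₁,x₂) = (0, λx₂ − S⁻¹x₂). If (x₁,x₂) ∈ D(A_ext) and g ∈ X₁ satisfy (λI − A_ext − P)(x₁,x₂) = (g, 0), then x₂ = SA₂x₁, x₁ ∈ D(A_S), and (λI − A_S)x₁ = g, where A_S x = A₁(x, SA₂x)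 on D(A_S) = {x ∈ X₁ : (x, SA₂x) ∈ D(A_ext)}. In particular, if λI − A_ext − P is surjective onto X₁ × X₂, then λI − A_S is surjective onto X₁. -/
open Complex

/-- If `(λI − A_ext − P)(x₁,x₂) = (g,0)` with
`A_ext(x₁,x₂) = (A₁(x₁,x₂), A₂x₁)` and `P(x₁,x₂) = (0, λx₂ − S⁻¹x₂)`, then
`x₂ = S A₂ x₁`, `x₁ ∈ D(A_S)` and `(λI − A_S)x₁ = g`.  In particular surjectivity of
`λI − A_ext − P` onto `X₁ × X₂` implies surjectivity of `λI − A_S` onto `X₁`. -/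
theorem stmt_8 (X₁ X₂ : Type*)
    [NormedAddCommGroup X₁] [NormedSpace ℂ X₁] [CompleteSpace X₁]
    [NormedAddCommGroup X₂] [NormedSpace ℂ X₂] [CompleteSpace X₂]
    (D1 : Set (X₁ × X₂)) (A1 : X₁ × X₂ → X₁) (hA1 : IsLinearOn D1 A1)
    (D2 : Set X₁) (A2 : X₁ → X₂) (hA2 : IsLinearOn D2 A2)
    (S Sinv : X₂ →L[ℂ] X₂) (hinv₁ : ∀ x, Sinv (S x) = x) (hinv₂ : ∀ x, S (Sinv x) = x)
    (lam : ℝ) (hlam : 0 < lam) :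
    (∀ x : X₁ × X₂, x.1 ∈ D2 → x ∈ D1 → ∀ g : X₁,
      (lam • x.1 - A1 x - 0 = g ∧
        lam • x.2 - A2 x.1 - (lam • x.2 - Sinv x.2) = 0) →
      (x.2 = S (A2 x.1) ∧
        ((x.1, S (A2 x.1)).1 ∈ D2 ∧ (x.1, S (A2 x.1)) ∈ D1) ∧
        lam • x.1 - A1 (x.1, S (A2 x.1)) = g)) ∧
    ((∀ w : X₁ × X₂, ∃ x : X₁ × X₂, (x.1 ∈ D2 ∧ x ∈ D1) ∧
        (lam • x.1 - A1 x - 0, lam • x.2 - A2 x.1 - (lam • x.2 - Sinv x.2)) = w) →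
      ∀ g : X₁, ∃ x₁ : X₁, (x₁ ∈ D2 ∧ (x₁, S (A2 x₁)) ∈ D1) ∧
        lam • x₁ - A1 (x₁, S (A2 x₁)) = g) := by
  have key : ∀ x : X₁ × X₂, x.1 ∈ D2 → x ∈ D1 → ∀ g : X₁,
      (lam • x.1 - A1 x - 0 = g ∧
        lam • x.2 - A2 x.1 - (lam • x.2 - Sinv x.2) = 0) →
      (x.2 = S (A2 x.1) ∧
        ((x.1, S (A2 x.1)).1 ∈ D2 ∧ (x.1, S (A2 x.1)) ∈ D1) ∧
        lam • x.1 - A1 (x.1, S (A2 x.1)) = g) := by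
    rintro ⟨x1, x2⟩ h2 h1 g ⟨e1, e2⟩
    have hs : Sinv x2 - A2 x1 = 0 := by rw [← e2]; abel
    have hs' : Sinv x2 = A2 x1 := by rwa [sub_eq_zero] at hs
    have hx2 : x2 = S (A2 x1) := by rw [← hs', hinv₂]
    refine ⟨hx2, ⟨h2, ?_⟩, ?_⟩
    · simpa [← hx2] using h1
    · rw [← hx2]; simpa using e1
  refine ⟨key, ?_⟩
  intro hsurj g
  obtain ⟨x, ⟨hx2, hx1⟩, hx⟩ := hsurj (g, 0)
  have := key x hx2 hx1 g ⟨by simpa using congrArg Prod.fst hx, by simpa using congrArg Prod.snd hx⟩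
  exact ⟨x.1, ⟨this.2.1.1, this.2.1.2⟩, this.2.2⟩
end

section
/- Let X be a complex Banach space and S: X → X a bounded bijective operator with bounded inverse. If there exist a semi-inner-product [·,·] on X and m > 0 such that Re[x, Sx] ≥ m‖x‖² for all x ∈ X, then for every semi-inner-product [·,·]' on X there exists m' > 0 such that Re[x, Sx]' ≥ m'‖x‖² for all x ∈ X. -/
open Complex

/-- Cauchy–Schwarz for the real part of a semi-inner-product. -/
lemma IsSIP.re_le {X : Type*} [NormedAddCommGroup X] [NormedSpace ℂ X]
    {sip : X → X → ℂ} (hsip : IsSIP sip) (x y : X) :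
    (sip x y).re ≤ ‖x‖ * ‖y‖ := by
  obtain ⟨-, -, -, hcs⟩ := hsip
  have h1 : (sip x y).re ≤ ‖sip x y‖ := Complex.re_le_norm _
  have h2 := hcs x y
  have h3 : (0:ℝ) ≤ ‖sip x y‖ := norm_nonneg _
  nlinarith [norm_nonneg x, norm_nonneg y, mul_nonneg (norm_nonneg x) (norm_nonneg y)]

private lemma sip_re_expand (r b : ℝ) (z : ℂ) :
    ((r:ℂ)^2 + (b:ℂ)*z).re = r^2 + b*z.re := by
  simp [Complex.add_re, Complex.mul_re, sq]

set_option maxHeartbeats 1000000 in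
/-- If a boundedly invertible `S` satisfies `Re [x, Sx] ≥ m‖x‖²` for one
semi-inner-product, then a corresponding estimate holds for every semi-inner-product. -/
theorem stmt_11 (X : Type*) [NormedAddCommGroup X] [NormedSpace ℂ X] [CompleteSpace X]
    (S Sinv : X →L[ℂ] X) (hinv₁ : ∀ x, Sinv (S x) = x) (hinv₂ : ∀ x, S (Sinv x) = x)
    (sip : X → X → ℂ) (hsip : IsSIP sip)
    (m : ℝ) (hm : 0 < m) (hS : ∀ x : X, m * ‖x‖ ^ 2 ≤ (sip x (S x)).re) :
    ∀ sip' : X → X → ℂ, IsSIP sip' →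
      ∃ m' : ℝ, 0 < m' ∧ ∀ x : X, m' * ‖x‖ ^ 2 ≤ (sip' x (S x)).re := by
  obtain ⟨hadd, hsmul, hnorm, hcs⟩ := hsip
  have cs := IsSIP.re_le ⟨hadd, hsmul, hnorm, hcs⟩
  set c : ℝ := m / (‖S‖ ^ 2 + 1) with hc_def
  have hSnn : (0:ℝ) ≤ ‖S‖ := norm_nonneg _
  have hc : 0 < c := div_pos hm (by positivity)
  -- norm comparison: ‖Sinv y‖² controls ‖y‖²
  have hcomp : ∀ y : X, ‖y‖ ^ 2 ≤ (‖S‖ ^ 2 + 1) * ‖Sinv y‖ ^ 2 := by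
    intro y
    have h1 : ‖y‖ ≤ ‖S‖ * ‖Sinv y‖ := by
      conv_lhs => rw [← hinv₂ y]
      exact S.le_opNorm _
    nlinarith [norm_nonneg y, norm_nonneg (Sinv y)]
  -- Step 1: expansiveness of 1 + t • Sinv
  have step1 : ∀ t : ℝ, 0 ≤ t → ∀ y : X,
      (1 + t * c) * ‖y‖ ≤ ‖y + (t : ℂ) • Sinv y‖ := by
    intro t ht y
    rcases eq_or_ne y 0 with rfl | hy
    · simp
    have hy' : 0 < ‖y‖ := norm_pos_iff.mpr hy
    set x := Sinv y with hx
    have hSx : S x = y := hinv₂ y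
    have h1 : (sip (y + (t : ℂ) • x) y).re = ‖y‖ ^ 2 + t * (sip x y).re := by
      rw [hadd, hsmul, hnorm, sip_re_expand]
    have h2 : m * ‖x‖ ^ 2 ≤ (sip x y).re := by
      have := hS x
      rwa [hSx] at this
    have h3 : ‖y‖ ^ 2 ≤ (‖S‖ ^ 2 + 1) * ‖x‖ ^ 2 := hcomp y
    have h4 : c * ‖y‖ ^ 2 ≤ m * ‖x‖ ^ 2 := by
      rw [hc_def, div_mul_eq_mul_div, div_le_iff₀ (by positivity)]
      nlinarith
    have h5 : (sip (y + (t : ℂ) • x) y).re ≤ ‖y + (t : ℂ) • x‖ * ‖y‖ :=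
      cs _ _
    rw [h1] at h5
    have h6 : t * (c * ‖y‖ ^ 2) ≤ t * (sip x y).re :=
      mul_le_mul_of_nonneg_left (h4.trans h2) ht
    nlinarith
  -- choice of the time step
  set K : ℝ := ‖Sinv‖ ^ 2 with hK_def
  have hK : 0 ≤ K := by positivity
  set t₀ : ℝ := c / (2 * K + c ^ 2) with ht₀_def
  have ht₀ : 0 < t₀ := div_pos hc (by positivity)
  have hBnn : (0:ℝ) ≤ ‖Sinv‖ := norm_nonneg _
  have htimes : t₀ * (2 * K + c ^ 2) = c := by
    rw [ht₀_def, div_mul_cancel₀]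
    positivity
  have htB : ‖-((t₀ : ℂ) • Sinv)‖ < 1 := by
    rw [norm_neg]
    calc ‖(t₀:ℂ) • Sinv‖ ≤ ‖(t₀:ℂ)‖ * ‖Sinv‖ := ContinuousLinearMap.opNorm_smul_le _ _
      _ = t₀ * ‖Sinv‖ := by simp [abs_of_pos ht₀]
      _ < 1 := by
          rw [ht₀_def, div_mul_eq_mul_div, div_lt_one (by positivity)]
          rw [hK_def]
          nlinarith [sq_nonneg (2 * c - ‖Sinv‖), sq_nonneg ‖Sinv‖, sq_nonneg (c - ‖Sinv‖)]
  -- the inverse of 1 + t₀ • Sinv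
  set U : (X →L[ℂ] X)ˣ := Units.oneSub (-((t₀ : ℂ) • Sinv)) htB with hU_def
  have hUval : (U : X →L[ℂ] X) = 1 + (t₀ : ℂ) • Sinv := by
    rw [hU_def, Units.val_oneSub, sub_neg_eq_add]
  have hUapp : ∀ y : X, (U : X →L[ℂ] X) y = y + (t₀ : ℂ) • Sinv y := by
    intro y; rw [hUval]; simp
  set V : X →L[ℂ] X := ((U⁻¹ : (X →L[ℂ] X)ˣ) : X →L[ℂ] X) with hV_def
  have hVU : ∀ y : X, V ((U : X →L[ℂ] X) y) = y := by
    intro y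
    calc V ((U : X →L[ℂ] X) y) = ((↑U⁻¹ * ↑U : X →L[ℂ] X)) y := rfl
      _ = (1 : X →L[ℂ] X) y := by rw [U.inv_mul]
      _ = y := rfl
  have hUV : ∀ y : X, (U : X →L[ℂ] X) (V y) = y := by
    intro y
    calc (U : X →L[ℂ] X) (V y) = ((↑U * ↑U⁻¹ : X →L[ℂ] X)) y := rfl
      _ = (1 : X →L[ℂ] X) y := by rw [U.mul_inv]
      _ = y := rfl
  -- Step 2: V is a contraction with factor 1/(1 + t₀ c)
  have step2 : ∀ z : X, (1 + t₀ * c) * ‖V z‖ ≤ ‖z‖ := by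
    intro z
    have h1 := step1 t₀ ht₀.le (V z)
    rwa [← hUapp, hUV] at h1
  -- Step 3: 1 - t₀ • Sinv is a strict contraction
  have step3 : ∀ y : X, ‖y - (t₀ : ℂ) • Sinv y‖ ≤ (1 - t₀ * c / 2) * ‖y‖ := by
    intro y
    set w : X := y - (t₀ : ℂ) • Sinv y with hw
    have hUw : (U : X →L[ℂ] X) w = y - ((t₀ : ℂ) ^ 2) • Sinv (Sinv y) := by
      rw [hUapp, hw]
      simp only [map_sub, map_smul, smul_sub, smul_smul]
      rw [← pow_two]
      abel
    have hwV : w = V (y - ((t₀ : ℂ) ^ 2) • Sinv (Sinv y)) := by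
      rw [← hUw, hVU]
    have h1 : (1 + t₀ * c) * ‖w‖ ≤ ‖y - ((t₀ : ℂ) ^ 2) • Sinv (Sinv y)‖ := by
      rw [hwV]; exact step2 _
    have h2 : ‖y - ((t₀ : ℂ) ^ 2) • Sinv (Sinv y)‖ ≤ (1 + t₀ ^ 2 * K) * ‖y‖ := by
      have hb : ‖Sinv (Sinv y)‖ ≤ ‖Sinv‖ * (‖Sinv‖ * ‖y‖) :=
        le_trans (Sinv.le_opNorm _) (by
          have := Sinv.le_opNorm y
          nlinarith)
      have hsm : ‖((t₀ : ℂ) ^ 2) • Sinv (Sinv y)‖ = t₀ ^ 2 * ‖Sinv (Sinv y)‖ := by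
        have hn : ‖((t₀ : ℂ) ^ 2)‖ = t₀ ^ 2 := by
          rw [norm_pow]
          simp [abs_of_pos ht₀]
        rw [norm_smul, hn]
      calc ‖y - ((t₀ : ℂ) ^ 2) • Sinv (Sinv y)‖
          ≤ ‖y‖ + ‖((t₀ : ℂ) ^ 2) • Sinv (Sinv y)‖ := norm_sub_le _ _
        _ ≤ ‖y‖ + t₀ ^ 2 * (‖Sinv‖ * (‖Sinv‖ * ‖y‖)) := by
            rw [hsm]
            nlinarith [norm_nonneg (Sinv (Sinv y)), sq_nonneg t₀]
        _ = (1 + t₀ ^ 2 * K) * ‖y‖ := by rw [hK_def]; ring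
    -- key numeric inequality: (1 + t₀² K) ≤ (1 + t₀ c)(1 - t₀ c / 2)
    have hnum : 1 + t₀ ^ 2 * K ≤ (1 + t₀ * c) * (1 - t₀ * c / 2) := by
      have h' : t₀ * (t₀ * (2 * K + c ^ 2)) = t₀ * c := by rw [htimes]
      nlinarith [h']
    have hcomb := le_trans h1 (h2.trans (mul_le_mul_of_nonneg_right hnum (norm_nonneg y)))
    nlinarith [norm_nonneg y, norm_nonneg w, mul_pos ht₀ hc]
  -- now the conclusion for an arbitrary SIP
  intro sip' hsip'
  obtain ⟨hadd', hsmul', hnorm', hcs'⟩ := hsip'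
  have cs' := IsSIP.re_le ⟨hadd', hsmul', hnorm', hcs'⟩
  refine ⟨c / 2 / (‖Sinv‖ ^ 2 + 1), by positivity, ?_⟩
  intro x
  set y : X := S x with hy
  have hxy : Sinv y = x := hinv₁ x
  have h1 : (sip' (y + (-(t₀ : ℂ)) • x) y).re = ‖y‖ ^ 2 + (-t₀) * (sip' x y).re := by
    rw [hadd', hsmul', hnorm']
    have : (-(t₀ : ℂ)) = ((-t₀ : ℝ) : ℂ) := by push_cast; ring
    rw [this, sip_re_expand]
  have heq : y + (-(t₀ : ℂ)) • x = y - (t₀ : ℂ) • Sinv y := by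
    rw [hxy, neg_smul, sub_eq_add_neg]
  have h2 : (sip' (y + (-(t₀ : ℂ)) • x) y).re ≤ (1 - t₀ * c / 2) * ‖y‖ * ‖y‖ := by
    calc (sip' (y + (-(t₀ : ℂ)) • x) y).re ≤ ‖y + (-(t₀ : ℂ)) • x‖ * ‖y‖ := cs' _ _
      _ ≤ (1 - t₀ * c / 2) * ‖y‖ * ‖y‖ := by
          rw [heq]
          have h := step3 y
          nlinarith [norm_nonneg y]
  have h3 : c / 2 * ‖y‖ ^ 2 ≤ (sip' x y).re := by
    rw [h1] at h2
    have h6 : t₀ * (c / 2 * ‖y‖ ^ 2) ≤ t₀ * (sip' x y).re := by nlinarith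
    exact le_of_mul_le_mul_left h6 ht₀
  have h4 : ‖x‖ ^ 2 ≤ (‖Sinv‖ ^ 2 + 1) * ‖y‖ ^ 2 := by
    have h5 : ‖x‖ ≤ ‖Sinv‖ * ‖y‖ := by
      conv_lhs => rw [← hxy]
      exact Sinv.le_opNorm _
    nlinarith [norm_nonneg x, norm_nonneg y]
  calc c / 2 / (‖Sinv‖ ^ 2 + 1) * ‖x‖ ^ 2
      ≤ c / 2 / (‖Sinv‖ ^ 2 + 1) * ((‖Sinv‖ ^ 2 + 1) * ‖y‖ ^ 2) := by
        apply mul_le_mul_of_nonneg_left h4 (by positivity)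
    _ = c / 2 * ‖y‖ ^ 2 := by field_simp
    _ ≤ (sip' x (S x)).re := h3
end
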